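/- Let V be a complex vector space with a symmetric bilinear form (,) and a a fixed vector of V. Then the product u * v = (u,v)a + (u,a)v defines a left-symmetric algebra structure on V. -/

import Mathlib

/-! Expanding twice, the associator `(u*v)*w - u*(v*w)` collapses to
`((u,v)(a,w) - (u,a)(v,w) - (v,a)(u,w)) a + (u,v)(a,a) w`, where the only term not
already symmetric in `u` and `v` is `(u,v)`. -/

/-- The product u * v = (u,v)a + (u,a)v on a complex vector space with a symmetric
bilinear form. -/
def burgersProd {V : Type*} [AddCommGroup V] [Module ℂ V]
    (B : V →ₗ[ℂ] V →ₗ[ℂ] ℂ) (a : V) (u v : V) : V :=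
  B u v • a + B u a • v

theorem burgersProd_associator {V : Type*} [AddCommGroup V] [Module ℂ V]
    (B : V →ₗ[ℂ] V →ₗ[ℂ] ℂ) (a u v w : V) :
    burgersProd B a (burgersProd B a u v) w - burgersProd B a u (burgersProd B a v w) =
      (B u v * B a w - B u a * B v w - B v a * B u w) • a + (B u v * B a a) • w := by
  simp only [burgersProd, map_add, map_smul, LinearMap.add_apply, LinearMap.smul_apply,
    smul_eq_mul]
  module

theorem lsym_from_bilinear_form (V : Type*) [AddCommGroup V] [Module ℂ V]
    (B : V →ₗ[ℂ] V →ₗ[ℂ] ℂ) (hB : ∀ u v : V, B u v = B v u) (a : V) :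
    ∀ u v w : V,
      burgersProd B a (burgersProd B a u v) w - burgersProd B a u (burgersProd B a v w)
      = burgersProd B a (burgersProd B a v u) w - burgersProd B a v (burgersProd B a u w) := by
  intro u v w
  rw [burgersProd_associator, burgersProd_associator, hB v u]
  module
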